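/- arXiv:0707.2411 — 2 statements merged into one kernel-verified Lean document; each statement's English description precedes it below -/
import Mathlib

section
/- Let m ≥ 2 and let A be a real m×m symmetric matrix with a_{ij} ≥ 0 for all i ≠ j, zero row sums (Σ_{j=1}^m a_{ij} = 0 for every i), and irreducible (for every pair of indices i ≠ j there is a finite chain i = i₀, i₁, …, i_k = j with a_{i_l i_{l+1}} ≠ 0). Then for every ε > 0 the matrix Ã obtained from A by replacing the (1,1) entry a_{11} with a_{11} − ε is negative definite, i.e., vᵀÃv < 0 for every nonzero v ∈ ℝᵐ (equivalently, all eigenvalues of Ã are negative). -/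
/-!
For a symmetric matrix with zero row sums, `vᵀ A v = -½ ∑ᵢⱼ aᵢⱼ (vᵢ - vⱼ)²`, which is `≤ 0` when the
off-diagonal entries are nonnegative. Pinning the first entry subtracts `ε v₁²`, so `vᵀ Ã v = 0` forces
`v₁ = 0` and `vᵢ = vⱼ` whenever `aᵢⱼ ≠ 0`; by irreducibility `v` is then constant, hence zero.
-/

open Matrix

namespace Matrix

variable {ι : Type*}

theorem dotProduct_mulVec_self_eq_neg_half_sum_sq [Fintype ι] {A : Matrix ι ι ℝ} (hsym : A.IsSymm)
    (hrow : ∀ i, ∑ j, A i j = 0) (v : ι → ℝ) :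
    v ⬝ᵥ A *ᵥ v = -(∑ i, ∑ j, A i j * (v i - v j) ^ 2) / 2 := by
  have hrow_sq : ∑ i, ∑ j, A i j * v i ^ 2 = 0 :=
    Finset.sum_eq_zero fun i _ => by rw [← Finset.sum_mul, hrow, zero_mul]
  have hcol_sq : ∑ i, ∑ j, A i j * v j ^ 2 = 0 := by
    rw [Finset.sum_comm]
    simp_rw [← hsym.apply]
    exact hrow_sq
  have hexpand : ∑ i, ∑ j, A i j * (v i - v j) ^ 2
      = ∑ i, ∑ j, A i j * v i ^ 2 - 2 * ∑ i, ∑ j, v i * (A i j * v j)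
        + ∑ i, ∑ j, A i j * v j ^ 2 := by
    rw [Finset.mul_sum]
    simp only [Finset.mul_sum, ← Finset.sum_sub_distrib, ← Finset.sum_add_distrib]
    exact Finset.sum_congr rfl fun i _ => Finset.sum_congr rfl fun j _ => by ring
  simp only [dotProduct, mulVec, Finset.mul_sum]
  linarith

theorem mul_sq_sub_nonneg {A : Matrix ι ι ℝ} (hoff : ∀ i j, i ≠ j → 0 ≤ A i j)
    (v : ι → ℝ) (i j : ι) : 0 ≤ A i j * (v i - v j) ^ 2 := by
  rcases eq_or_ne i j with rfl | hij
  · simp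
  · exact mul_nonneg (hoff i j hij) (sq_nonneg _)

theorem sum_mul_sq_sub_nonneg [Fintype ι] {A : Matrix ι ι ℝ} (hoff : ∀ i j, i ≠ j → 0 ≤ A i j)
    (v : ι → ℝ) : 0 ≤ ∑ i, ∑ j, A i j * (v i - v j) ^ 2 :=
  Finset.sum_nonneg fun i _ => Finset.sum_nonneg fun j _ => mul_sq_sub_nonneg hoff v i j

theorem apply_eq_of_sum_mul_sq_sub_eq_zero [Fintype ι] {A : Matrix ι ι ℝ}
    (hoff : ∀ i j, i ≠ j → 0 ≤ A i j) {v : ι → ℝ}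
    (hzero : ∑ i, ∑ j, A i j * (v i - v j) ^ 2 = 0) {i j : ι}
    (hij : Relation.TransGen (fun p q => A p q ≠ 0) i j) : v i = v j := by
  have hstep : ∀ p q, A p q ≠ 0 → v p = v q := by
    intro p q hpq
    rw [← Fintype.sum_prod_type'] at hzero
    have hterm : A p q * (v p - v q) ^ 2 = 0 :=
      congrFun ((Fintype.sum_eq_zero_iff_of_nonneg fun x : ι × ι =>
        mul_sq_sub_nonneg hoff v x.1 x.2).mp hzero) (p, q)
    simpa [hpq, sub_eq_zero] using hterm
  induction hij with
  | single hpq => exact hstep _ _ hpq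
  | tail _ hpq ih => exact ih.trans (hstep _ _ hpq)

theorem dotProduct_sub_single_mulVec [Fintype ι] [DecidableEq ι] (A : Matrix ι ι ℝ) (k : ι) (c : ℝ)
    (v : ι → ℝ) : v ⬝ᵥ (A - single k k c) *ᵥ v = v ⬝ᵥ A *ᵥ v - c * v k ^ 2 := by
  rw [sub_mulVec, dotProduct_sub, single_mulVec]
  simp only [dotProduct, Function.update_apply, Pi.zero_apply, mul_ite, mul_zero,
    Finset.sum_ite_eq', Finset.mem_univ, ↓reduceIte]
  ring

end Matrix

/-- Proposition 1: pinning an irreducible symmetric zero-row-sum matrix with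
nonnegative off-diagonal entries makes it negative definite. -/
theorem stmt_0 (m : ℕ) (hm : 2 ≤ m) (A : Matrix (Fin m) (Fin m) ℝ)
    (hsym : A.IsSymm)
    (hoff : ∀ i j : Fin m, i ≠ j → 0 ≤ A i j)
    (hrow : ∀ i : Fin m, ∑ j, A i j = 0)
    (hirr : ∀ i j : Fin m, i ≠ j → Relation.TransGen (fun p q => A p q ≠ 0) i j)
    (ε : ℝ) (hε : 0 < ε)
    (Atil : Matrix (Fin m) (Fin m) ℝ)
    (hAtil : ∀ i j : Fin m, Atil i j =
      if i = (⟨0, by omega⟩ : Fin m) ∧ j = (⟨0, by omega⟩ : Fin m) then A i j - ε else A i j)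
    (v : Fin m → ℝ) (hv : v ≠ 0) :
    v ⬝ᵥ Atil *ᵥ v < 0 := by
  set z : Fin m := ⟨0, by omega⟩
  have hAtil_eq : Atil = A - single z z ε := by
    ext i j
    rw [hAtil, Matrix.sub_apply, single_apply]
    by_cases h : i = z ∧ j = z
    · obtain ⟨rfl, rfl⟩ := h
      simp
    · rw [if_neg h, if_neg fun h' => h ⟨h'.1.symm, h'.2.symm⟩, sub_zero]
  rw [hAtil_eq, dotProduct_sub_single_mulVec, dotProduct_mulVec_self_eq_neg_half_sum_sq hsym hrow]
  have hS := sum_mul_sq_sub_nonneg hoff v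
  have hvz2 : 0 ≤ ε * v z ^ 2 := by positivity
  by_contra! hle
  have hvz : v z = 0 := pow_eq_zero_iff two_ne_zero |>.mp <| by nlinarith
  have hS0 : ∑ i, ∑ j, A i j * (v i - v j) ^ 2 = 0 := by linarith
  refine hv (funext fun i => ?_)
  rcases eq_or_ne i z with rfl | hiz
  · exact hvz
  · rw [apply_eq_of_sum_mul_sq_sub_eq_zero hoff hS0 (hirr i z hiz), hvz, Pi.zero_apply]
end

section
/- Let m ≥ 1 and let A be a real m×m symmetric matrix with a_{ij} ≥ 0 for all i ≠ j and zero row sums. Let g : ℝ → ℝ and α > 0 satisfy (g(a) − g(b))(a − b) ≥ α(a − b)² for all a, b ∈ ℝ. Then for every u ∈ ℝᵐ, writing g(u) = (g(u₁),…,g(u_m)), one has uᵀ A g(u) ≤ α · uᵀ A u (and in particular uᵀ A g(u) ≤ 0). -/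
/-!
Because the rows of `A` sum to zero and `A` is symmetric, the bilinear form is a weighted sum of
pairwise differences, `2 uᵀ A v = -∑ᵢⱼ aᵢⱼ (uᵢ - uⱼ)(vᵢ - vⱼ)`, whose off-diagonal weights are
nonnegative. Comparing termwise with `(g a - g b)(a - b) ≥ α (a - b)² ≥ 0` gives both bounds.
-/

open Matrix BigOperators

namespace Matrix

variable {ι R : Type*} [Fintype ι]

theorem dotProduct_mulVec_eq_sum_mul_sub [CommRing R] {A : Matrix ι ι R}
    (hrow : ∀ i, ∑ j, A i j = 0) (u v : ι → R) :
    u ⬝ᵥ A *ᵥ v = ∑ i, ∑ j, A i j * u i * (v j - v i) := by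
  simp only [dotProduct, mulVec, mul_sub, Finset.sum_sub_distrib, Finset.mul_sum]
  have hdiag : ∀ i, ∑ j, A i j * u i * v i = 0 := fun i => by
    rw [← Finset.sum_mul, ← Finset.sum_mul, hrow, zero_mul, zero_mul]
  simp only [hdiag, Finset.sum_const_zero, sub_zero]
  exact Finset.sum_congr rfl fun i _ => Finset.sum_congr rfl fun j _ => by ring

theorem two_mul_dotProduct_mulVec_eq_neg_sum [CommRing R] {A : Matrix ι ι R}
    (hsym : A.IsSymm) (hrow : ∀ i, ∑ j, A i j = 0) (u v : ι → R) :
    2 * (u ⬝ᵥ A *ᵥ v) = -∑ i, ∑ j, A i j * ((u i - u j) * (v i - v j)) := by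
  have hswap : u ⬝ᵥ A *ᵥ v = ∑ i, ∑ j, A i j * u j * (v i - v j) := by
    rw [dotProduct_mulVec_eq_sum_mul_sub hrow, Finset.sum_comm]
    simp only [hsym.apply]
  rw [two_mul]
  nth_rw 1 [dotProduct_mulVec_eq_sum_mul_sub hrow]
  rw [hswap, ← Finset.sum_add_distrib, ← Finset.sum_neg_distrib]
  refine Finset.sum_congr rfl fun i _ => ?_
  rw [← Finset.sum_add_distrib, ← Finset.sum_neg_distrib]
  exact Finset.sum_congr rfl fun j _ => by ring

variable {A : Matrix ι ι ℝ} (hsym : A.IsSymm) (hoff : ∀ i j, i ≠ j → 0 ≤ A i j)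
  (hrow : ∀ i, ∑ j, A i j = 0)
include hsym hoff hrow

theorem dotProduct_mulVec_le_of_sub_mul_sub_le {u v x w : ι → ℝ}
    (h : ∀ i j, (x i - x j) * (w i - w j) ≤ (u i - u j) * (v i - v j)) :
    u ⬝ᵥ A *ᵥ v ≤ x ⬝ᵥ A *ᵥ w := by
  have hterm : ∀ i j, A i j * ((x i - x j) * (w i - w j)) ≤
      A i j * ((u i - u j) * (v i - v j)) := fun i j => by
    rcases eq_or_ne i j with rfl | hij
    · simp
    · exact mul_le_mul_of_nonneg_left (h i j) (hoff i j hij)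
  have hsum := Finset.sum_le_sum fun i (_ : i ∈ Finset.univ) =>
    Finset.sum_le_sum fun j (_ : j ∈ Finset.univ) => hterm i j
  have := two_mul_dotProduct_mulVec_eq_neg_sum hsym hrow u v
  have := two_mul_dotProduct_mulVec_eq_neg_sum hsym hrow x w
  linarith

theorem dotProduct_mulVec_self_nonpos (u : ι → ℝ) : u ⬝ᵥ A *ᵥ u ≤ 0 := by
  simpa using dotProduct_mulVec_le_of_sub_mul_sub_le hsym hoff hrow (x := u) (w := 0)
    fun i j => by simpa using mul_self_nonneg (u i - u j)

end Matrix

theorem stmt_10_general (m : ℕ) (A : Matrix (Fin m) (Fin m) ℝ)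
    (hsym : A.IsSymm)
    (hoff : ∀ i j : Fin m, i ≠ j → 0 ≤ A i j)
    (hrow : ∀ i : Fin m, ∑ j, A i j = 0)
    (g : ℝ → ℝ) (α : ℝ) (hα : 0 < α)
    (hg : ∀ a b : ℝ, α * (a - b) ^ 2 ≤ (g a - g b) * (a - b))
    (u : Fin m → ℝ) :
    u ⬝ᵥ A *ᵥ (fun i => g (u i)) ≤ α * (u ⬝ᵥ A *ᵥ u) ∧
      u ⬝ᵥ A *ᵥ (fun i => g (u i)) ≤ 0 := by
  have hbound : u ⬝ᵥ A *ᵥ (fun i => g (u i)) ≤ α * (u ⬝ᵥ A *ᵥ u) := by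
    rw [← smul_eq_mul, ← dotProduct_smul, ← mulVec_smul]
    refine dotProduct_mulVec_le_of_sub_mul_sub_le hsym hoff hrow fun i j => ?_
    simpa [Pi.smul_apply, smul_eq_mul, ← mul_sub, sq, mul_comm, mul_left_comm]
      using hg (u i) (u j)
  have hquad := dotProduct_mulVec_self_nonpos hsym hoff hrow u
  exact ⟨hbound, hbound.trans (mul_nonpos_of_nonneg_of_nonpos hα.le hquad)⟩

/-- For a symmetric zero-row-sum matrix `A` with nonnegative off-diagonal entries
and an increasing function `g` with slope at least `α > 0`, one has
`uᵀ A g(u) ≤ α · uᵀ A u ≤ 0`. -/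
theorem stmt_10 (m : ℕ) (hm : 1 ≤ m) (A : Matrix (Fin m) (Fin m) ℝ)
    (hsym : A.IsSymm)
    (hoff : ∀ i j : Fin m, i ≠ j → 0 ≤ A i j)
    (hrow : ∀ i : Fin m, ∑ j, A i j = 0)
    (g : ℝ → ℝ) (α : ℝ) (hα : 0 < α)
    (hg : ∀ a b : ℝ, α * (a - b) ^ 2 ≤ (g a - g b) * (a - b))
    (u : Fin m → ℝ) :
    u ⬝ᵥ A *ᵥ (fun i => g (u i)) ≤ α * (u ⬝ᵥ A *ᵥ u) ∧
      u ⬝ᵥ A *ᵥ (fun i => g (u i)) ≤ 0 :=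
  stmt_10_general m A hsym hoff hrow g α hα hg u
end
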